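/- arXiv:0904.3167 — 6 statements merged into one kernel-verified Lean document; each statement's English description precedes it below -/
import Mathlib

section
/- Let A be a noetherian commutative ring, let p be an ideal of A, and let m be a prime ideal of A containing p. Then there exists an element s ∈ A \ m such that the localization A[1/s] is p-adically separated, i.e. ⋂_{n≥0} pⁿ·A[1/s] = 0 (where pⁿ·A[1/s] denotes the ideal of A[1/s] generated by the image of pⁿ). -/
/-- Let `A` be a noetherian commutative ring, `p` an ideal and
`m ⊇ p` a prime ideal. Then there is `s ∉ m` such that the localization
`A[1/s]` is `p`-adically separated. -/
theorem stmt2 {A : Type*} [CommRing A] [IsNoetherianRing A]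
    (p m : Ideal A) (hm : m.IsPrime) (hpm : p ≤ m) :
    ∃ s : A, s ∉ m ∧
      (⨅ n : ℕ, Ideal.map (algebraMap A (Localization.Away s)) (p ^ n)) = ⊥ := by
  set N : Ideal A := ⨅ n : ℕ, p ^ n with hNdef
  -- Krull intersection characterization in `A`
  have key : ∀ x : A, x ∈ N ↔ ∃ r : p, (r : A) * x = x := by
    intro x
    have := Ideal.mem_iInf_smul_pow_eq_bot_iff p x
    simp_rw [smul_eq_mul, ← Ideal.one_eq_top, mul_one] at this
    exact this
  have hle : N ≤ p • N := by
    intro x hx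
    obtain ⟨r, hr⟩ := (key x).mp hx
    rw [← hr, smul_eq_mul]
    exact Ideal.mul_mem_mul r.2 hx
  obtain ⟨r, hrp, hr⟩ :=
    Submodule.exists_mem_and_smul_eq_self_of_fg_of_le_smul p N (IsNoetherian.noetherian N) hle
  set s : A := 1 - r with hsdef
  have hsm : s ∉ m := by
    intro hs
    have : (1 : A) ∈ m := by
      have h := m.add_mem hs (hpm hrp)
      rwa [hsdef, sub_add_cancel] at h
    exact hm.ne_top (Ideal.eq_top_iff_one m |>.mpr this)
  have hsN : ∀ x ∈ N, s * x = 0 := by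
    intro x hx
    have := hr x hx
    rw [smul_eq_mul] at this
    rw [hsdef, sub_mul, one_mul, this, sub_self]
  refine ⟨s, hsm, ?_⟩
  set B := Localization.Away s with hB
  letI : IsNoetherianRing B :=
    IsLocalization.isNoetherianRing (Submonoid.powers s) B inferInstance
  set f := algebraMap A B with hf
  have hpow : ∀ k : ℕ, 1 - s ^ k ∈ p := by
    intro k
    induction k with
    | zero => simp
    | succ k ih =>
      have h1s : 1 - s ∈ p := by
        rw [hsdef]; simpa using hrp
      have : 1 - s ^ (k + 1) = (1 - s ^ k) + s ^ k * (1 - s) := by ring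
      rw [this]
      exact p.add_mem ih (p.mul_mem_left _ h1s)
  have hpow' : ∀ v ∈ Submonoid.powers s, 1 - v ∈ p := by
    rintro v ⟨k, rfl⟩
    exact hpow k
  rw [eq_bot_iff]
  intro b hb
  simp_rw [Ideal.map_pow] at hb
  -- Krull intersection characterization in `B`
  have keyB := Ideal.mem_iInf_smul_pow_eq_bot_iff (Ideal.map f p) b
  simp_rw [smul_eq_mul, ← Ideal.one_eq_top, mul_one] at keyB
  obtain ⟨r', hr'⟩ := keyB.mp hb
  obtain ⟨⟨⟨t, ht⟩, u⟩, hu⟩ :=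
    (IsLocalization.mem_map_algebraMap_iff (Submonoid.powers s) B).mp r'.2
  -- `r' * f u = f t`
  have hc : f ((u : A) - t) * b = 0 := by
    have h1 : f t * b = f (u : A) * b := by
      calc f t * b = ((r' : B) * f (u : A)) * b := by rw [hu]
      _ = f (u : A) * ((r' : B) * b) := by ring
      _ = f (u : A) * b := by rw [hr']
    rw [map_sub, sub_mul, h1, sub_self]
  obtain ⟨⟨a, v⟩, hav⟩ := IsLocalization.surj (Submonoid.powers s) b
  have hfa : f (((u : A) - t) * a) = 0 := by
    rw [map_mul]
    calc f ((u : A) - t) * f a = f ((u : A) - t) * (b * f v) := by rw [hav]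
    _ = (f ((u : A) - t) * b) * f v := by ring
    _ = 0 := by rw [hc, zero_mul]
  obtain ⟨w, hw⟩ := (IsLocalization.map_eq_zero_iff (Submonoid.powers s) B _).mp hfa
  -- `w * ((u - t) * a) = 0` with `w` a power of `s`
  set e : A := (w : A) * ((u : A) - t) with hedef
  have hea : e * a = 0 := by rw [hedef, mul_assoc]; exact hw
  have h1e : 1 - e ∈ p := by
    have h1 : 1 - (w : A) * (u : A) ∈ p := hpow' _ (mul_mem w.2 u.2)
    have : 1 - e = (1 - (w : A) * (u : A)) + (w : A) * t := by rw [hedef]; ring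
    rw [this]
    exact p.add_mem h1 (p.mul_mem_left _ ht)
  have haN : a ∈ N := by
    refine (key a).mpr ⟨⟨1 - e, h1e⟩, ?_⟩
    have : (1 - e) * a = a - e * a := by ring
    rw [this, hea, sub_zero]
  have hfa0 : f a = 0 := by
    refine (IsLocalization.map_eq_zero_iff (Submonoid.powers s) B _).mpr
      ⟨⟨s, ⟨1, pow_one s⟩⟩, hsN a haN⟩
  have : b * f v = 0 := by rw [hav, hfa0]
  exact ((IsLocalization.map_units B v).mul_left_eq_zero).mp this
end

section
/- Let (φ_λ : A → B_λ)_{λ∈L} be a family of homomorphisms of commutative rings such that ⋂_{λ∈L} ker(φ_λ) = 0. Let t ∈ A and suppose there exists an integer c ≥ 1 such that for every λ ∈ L and every b ∈ B_λ, if φ_λ(t)ⁿ · b = 0 for some n ≥ 0 then φ_λ(t)^c · b = 0. Then the induced homomorphisms A[1/t] → B_λ[1/φ_λ(t)] on localizations satisfy ⋂_{λ∈L} ker(A[1/t] → B_λ[1/φ_λ(t)]) = 0. -/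
/-- Let `(φ l : A → B l)` be a family of ring homomorphisms
with `⋂ ker (φ l) = 0`. Let `t ∈ A` and suppose there is `c ≥ 1` such that for
every `l` and `b : B l`, if `φ l t ^ n * b = 0` for some `n` then
`φ l t ^ c * b = 0`. Then the induced maps on localizations
`A[1/t] → B l[1/φ l t]` have `⋂` of kernels equal to zero. -/
theorem stmt3 {A : Type*} [CommRing A] {L : Type*} (B : L → Type*)
    [∀ l, CommRing (B l)] (φ : ∀ l, A →+* B l)
    (h0 : (⨅ l, RingHom.ker (φ l)) = ⊥)
    (t : A) (c : ℕ) (hc : 1 ≤ c)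
    (hbd : ∀ (l : L) (b : B l) (n : ℕ), φ l t ^ n * b = 0 → φ l t ^ c * b = 0) :
    (⨅ l, RingHom.ker (Localization.awayMap (φ l) t)) = ⊥ := by
  rw [eq_bot_iff]
  intro x hx
  rw [Ideal.mem_iInf] at hx
  simp only [RingHom.mem_ker] at hx
  obtain ⟨⟨a, s⟩, hs⟩ := IsLocalization.surj (Submonoid.powers t) x
  simp only at hs
  have key : ∀ l, φ l (t ^ c * a) = 0 := by
    intro l
    have h2 : Localization.awayMap (φ l) t
        (algebraMap A (Localization.Away t) a) = 0 := by
      rw [← hs, map_mul, hx l, zero_mul]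
    rw [Localization.awayMap, IsLocalization.Away.map, IsLocalization.map_eq] at h2
    obtain ⟨m, hm⟩ :=
      (IsLocalization.map_eq_zero_iff (Submonoid.powers (φ l t))
        (Localization.Away (φ l t)) _).mp h2
    obtain ⟨k, hk⟩ := m.2
    have hkk : φ l t ^ k * φ l a = 0 := by
      rw [show φ l t ^ k = (m : B l) from hk]; exact hm
    have := hbd l (φ l a) k hkk
    rw [map_mul, map_pow]
    exact this
  have ha : t ^ c * a = 0 := by
    have hmem : t ^ c * a ∈ ⨅ l, RingHom.ker (φ l) := by
      rw [Ideal.mem_iInf]; intro l; exact key l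
    rw [h0, Ideal.mem_bot] at hmem
    exact hmem
  have hu : IsUnit (algebraMap A (Localization.Away t) t) :=
    IsLocalization.Away.algebraMap_isUnit t
  have haz : (algebraMap A (Localization.Away t)) a = 0 := by
    have h3 := congrArg (algebraMap A (Localization.Away t)) ha
    rw [map_mul, map_pow, map_zero] at h3
    exact ((hu.pow c).mul_right_eq_zero).mp h3
  have hsu : IsUnit (algebraMap A (Localization.Away t) s) :=
    IsLocalization.map_units _ s
  rw [Ideal.mem_bot]
  have : x * algebraMap A (Localization.Away t) s = 0 := by rw [hs, haz]
  exact (hsu.mul_left_eq_zero).mp this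
end

section
/- Let R be a discrete valuation ring with uniformizer π. Let A be an R-module which is π-adically separated, i.e. ⋂_{n≥0} πⁿA = 0. Let (B_λ)_{λ∈L} be a family of π-torsion-free R-modules and φ_λ : A → B_λ a family of R-linear maps such that the intersection over λ ∈ L of the kernels of the induced maps A/πA → B_λ/πB_λ is zero. Then A is π-torsion-free (hence flat over R) and ⋂_{λ∈L} ker(φ_λ) = 0. -/
/-! An element `a` killed by every `φ l` has zero image in each `B l / π B l`, so `a = π a'`;
since the `B l` are `π`-torsion-free, `a'` is again killed by every `φ l`. Hence `a` is divisible
by every power of `π` and vanishes by separatedness. A `π`-torsion element of `A` is killed by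
every `φ l`, so `A` is `π`-torsion-free; over a DVR every nonzero scalar is a unit times a power
of `π`, so `A` is torsion-free and therefore flat. -/

theorem IsDiscreteValuationRing.isTorsionFree_of_isSMulRegular {R M : Type*} [CommRing R]
    [IsDomain R] [IsDiscreteValuationRing R] [AddCommGroup M] [Module R M] {ϖ : R}
    (hϖ : Irreducible ϖ) (h : IsSMulRegular M ϖ) : Module.IsTorsionFree R M where
  isSMulRegular r hr := by
    obtain ⟨n, u, rfl⟩ := eq_unit_mul_pow_irreducible hr.ne_zero hϖ
    exact (Units.isSMulRegular M u).mul (h.pow n)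

theorem exists_eq_pow_smul_of_forall_exists_eq_smul {R A : Type*} [Monoid R] [MulAction R A]
    {π : R} {P : A → Prop} (hP : ∀ a, P a → ∃ b, P b ∧ a = π • b) (n : ℕ) {a : A} (ha : P a) :
    ∃ b, P b ∧ a = π ^ n • b := by
  induction n with
  | zero => exact ⟨a, ha, by rw [pow_zero, one_smul]⟩
  | succ n ih =>
    obtain ⟨b, hb, rfl⟩ := ih
    obtain ⟨c, hc, rfl⟩ := hP b hb
    exact ⟨c, hc, by rw [smul_smul, pow_succ]⟩

section

variable {R A L : Type*} {B : L → Type*} [Semiring R] [AddCommMonoid A] [Module R A]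
  [∀ l, AddCommMonoid (B l)] [∀ l, Module R (B l)] {π : R} {φ : ∀ l, A →ₗ[R] B l}

theorem exists_forall_map_eq_zero_and_eq_smul (htf : ∀ l, IsSMulRegular (B l) π)
    (hker : ∀ a : A, (∀ l, ∃ b : B l, φ l a = π • b) → ∃ a' : A, a = π • a') {a : A}
    (ha : ∀ l, φ l a = 0) : ∃ a', (∀ l, φ l a' = 0) ∧ a = π • a' := by
  obtain ⟨a', rfl⟩ := hker a fun l => ⟨0, by rw [ha l, smul_zero]⟩
  refine ⟨a', fun l => (htf l).right_eq_zero_of_smul ?_, rfl⟩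
  rw [← map_smul, ha l]

theorem eq_zero_of_forall_map_eq_zero (hsep : ∀ a : A, (∀ n : ℕ, ∃ b : A, a = π ^ n • b) → a = 0)
    (htf : ∀ l, IsSMulRegular (B l) π)
    (hker : ∀ a : A, (∀ l, ∃ b : B l, φ l a = π • b) → ∃ a' : A, a = π • a') {a : A}
    (ha : ∀ l, φ l a = 0) : a = 0 :=
  hsep a fun n => (exists_eq_pow_smul_of_forall_exists_eq_smul
    (fun _ => exists_forall_map_eq_zero_and_eq_smul htf hker) n ha).imp fun _ => And.right

end

/-- Let `R` be a DVR with uniformizer `π`. Let `A` be a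
`π`-adically separated `R`-module, `(B l)` a family of `π`-torsion-free
`R`-modules and `φ l : A → B l` `R`-linear maps such that the intersection of
the kernels of the induced maps `A/πA → B l/πB l` is zero. Then `A` is
`π`-torsion-free (hence flat over `R`) and `⋂ ker (φ l) = 0`. -/
theorem stmt4 {R : Type*} [CommRing R] [IsDomain R] [IsDiscreteValuationRing R]
    (π : R) (hπ : Irreducible π)
    {L : Type*} {A : Type*} [AddCommGroup A] [Module R A]
    (B : L → Type*) [∀ l, AddCommGroup (B l)] [∀ l, Module R (B l)]
    (hsep : ∀ a : A, (∀ n : ℕ, ∃ b : A, a = π ^ n • b) → a = 0)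
    (htf : ∀ (l : L) (b : B l), π • b = 0 → b = 0)
    (φ : ∀ l, A →ₗ[R] B l)
    (hker : ∀ a : A, (∀ l, ∃ b : B l, φ l a = π • b) → ∃ a' : A, a = π • a') :
    (∀ a : A, π • a = 0 → a = 0) ∧ Module.Flat R A ∧
      ∀ a : A, (∀ l, φ l a = 0) → a = 0 := by
  have hreg (l : L) : IsSMulRegular (B l) π := .of_right_eq_zero_of_smul (htf l)
  have hinj (a : A) : (∀ l, φ l a = 0) → a = 0 := eq_zero_of_forall_map_eq_zero hsep hreg hker
  have htors (a : A) (ha : π • a = 0) : a = 0 :=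
    hinj a fun l => htf l _ (by rw [← map_smul, ha, map_zero])
  have := IsDiscreteValuationRing.isTorsionFree_of_isSMulRegular hπ
    (.of_right_eq_zero_of_smul htors)
  exact ⟨htors, inferInstance, hinj⟩
end

section
/- Let R be a discrete valuation ring with fraction field K and uniformizer π, and let B be a commutative R-algebra which is π-torsion-free and such that B/πB is reduced. Then the natural injective map B → B ⊗_R K induces a bijection between the set of idempotent elements of B and the set of idempotent elements of B ⊗_R K. -/
/-!
Over a DVR, `B ⊗_R K` is the localization `B[1/π]`. An idempotent `x` of `B[1/π]` with
`π^(n+1) x = b` gives `b² = π^(n+1) b ∈ πB`; as `B/πB` is reduced, `b = π c`, and cancelling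
`π` in `B[1/π]` gives `π^n x = c`. Descending on `n`, `x` comes from `B`.
-/

open TensorProduct

theorem IsDiscreteValuationRing.isLocalization_away_of_irreducible {R : Type*} [CommRing R]
    [IsDomain R] [IsDiscreteValuationRing R] {π : R} (hπ : Irreducible π)
    (K : Type*) [CommRing K] [Algebra R K] [IsFractionRing R K] :
    IsLocalization.Away π K := by
  refine (IsLocalization.iff_of_le_of_exists_dvd (Submonoid.powers π) (nonZeroDivisors R)
    (powers_le_nonZeroDivisors_of_noZeroDivisors hπ.ne_zero) fun s hs => ?_).mpr ‹_›
  obtain ⟨n, u, hu⟩ := eq_unit_mul_pow_irreducible (nonZeroDivisors.ne_zero hs) hπ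
  refine ⟨π ^ n, ⟨n, rfl⟩, ⟨↑u⁻¹, ?_⟩⟩
  rw [hu, mul_comm, ← mul_assoc, Units.inv_mul, one_mul]

theorem Ideal.mem_span_singleton_of_mul_self_mem {B : Type*} [CommRing B] {p b : B}
    (hred : IsReduced (B ⧸ Ideal.span {p})) (hb : b * b ∈ Ideal.span {p}) :
    b ∈ Ideal.span {p} := by
  rw [← Ideal.Quotient.eq_zero_iff_mem] at hb ⊢
  exact IsReduced.eq_zero _ ⟨2, by rwa [pow_two, ← map_mul]⟩

section Descent

variable {B A : Type*} [CommRing B] [CommRing A] [Algebra B A] {p : B}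

theorem IsIdempotentElem.exists_mul_pow_eq_algebraMap_of_succ
    (hinj : Function.Injective (algebraMap B A)) (hp : IsUnit (algebraMap B A p))
    (hred : IsReduced (B ⧸ Ideal.span {p})) {x : A} (hx : IsIdempotentElem x) {n : ℕ} {b : B}
    (hb : x * algebraMap B A p ^ (n + 1) = algebraMap B A b) :
    ∃ c : B, x * algebraMap B A p ^ n = algebraMap B A c := by
  set q := algebraMap B A p ^ (n + 1)
  have hbb : b * b = p * (p ^ n * b) := hinj <| by
    calc algebraMap B A (b * b) = (x * x) * q * q := by rw [map_mul, ← hb]; ring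
      _ = algebraMap B A (p * (p ^ n * b)) := by
        rw [hx.eq, hb]; simp only [q, map_mul, map_pow]; ring
  have hbb_mem : b * b ∈ Ideal.span {p} :=
    hbb ▸ Ideal.mul_mem_right _ _ (Ideal.mem_span_singleton_self p)
  obtain ⟨c, rfl⟩ :=
    Ideal.mem_span_singleton'.mp (Ideal.mem_span_singleton_of_mul_self_mem hred hbb_mem)
  refine ⟨c, hp.mul_right_cancel ?_⟩
  rw [← map_mul, ← hb, mul_assoc, ← pow_succ]

theorem IsIdempotentElem.exists_algebraMap_eq_of_mul_pow_eq
    (hinj : Function.Injective (algebraMap B A)) (hp : IsUnit (algebraMap B A p))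
    (hred : IsReduced (B ⧸ Ideal.span {p})) {x : A} (hx : IsIdempotentElem x) :
    ∀ (n : ℕ) (b : B), x * algebraMap B A p ^ n = algebraMap B A b →
      ∃ c, algebraMap B A c = x
  | 0, b, hb => ⟨b, by simpa using hb.symm⟩
  | n + 1, _, hb =>
    let ⟨c, hc⟩ := hx.exists_mul_pow_eq_algebraMap_of_succ hinj hp hred hb
    hx.exists_algebraMap_eq_of_mul_pow_eq hinj hp hred n c hc

theorem IsLocalization.Away.bijOn_isIdempotentElem [IsLocalization.Away p A]
    (hp : p ∈ nonZeroDivisors B) (hred : IsReduced (B ⧸ Ideal.span {p})) :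
    Set.BijOn (algebraMap B A) {b | IsIdempotentElem b} {x | IsIdempotentElem x} := by
  have hinj : Function.Injective (algebraMap B A) :=
    IsLocalization.injective A (Submonoid.powers_le.mpr hp)
  refine ⟨fun b hb => hb.map (algebraMap B A), hinj.injOn, fun x hx => ?_⟩
  obtain ⟨n, b, hb⟩ := IsLocalization.Away.surj p x
  obtain ⟨c, hc⟩ := IsIdempotentElem.exists_algebraMap_eq_of_mul_pow_eq hinj
    (IsLocalization.Away.algebraMap_isUnit p) hred hx n b hb
  exact ⟨c, hinj (by rw [map_mul, hc, hx.eq] : algebraMap B A (c * c) = _), hc⟩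

end Descent

/-- Let `R` be a DVR with fraction field `K` and uniformizer
`π`, and let `B` be a `π`-torsion-free commutative `R`-algebra with `B/πB`
reduced. Then the natural map `B → B ⊗_R K` induces a bijection between the
idempotents of `B` and those of `B ⊗_R K`. -/
theorem stmt13 {R : Type*} [CommRing R] [IsDomain R] [IsDiscreteValuationRing R]
    (π : R) (hπ : Irreducible π)
    {B : Type*} [CommRing B] [Algebra R B]
    (htf : ∀ b : B, algebraMap R B π * b = 0 → b = 0)
    (hred : IsReduced (B ⧸ Ideal.span {algebraMap R B π})) :
    Set.BijOn
      (fun b : B => (Algebra.TensorProduct.includeLeft (S := R) b : B ⊗[R] FractionRing R))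
      {b : B | IsIdempotentElem b}
      {x : B ⊗[R] FractionRing R | IsIdempotentElem x} := by
  have := IsDiscreteValuationRing.isLocalization_away_of_irreducible hπ (FractionRing R)
  have hπB : algebraMap R B π ∈ nonZeroDivisors B :=
    mem_nonZeroDivisors_iff_left.mpr htf
  -- the instance `IsLocalization.Away.tensor` identifies `B ⊗[R] K` with `B[1/π]`
  exact IsLocalization.Away.bijOn_isIdempotentElem (A := B ⊗[R] FractionRing R) hπB hred
end

section
/- Let p be a prime number and let A be a commutative ring in which p·1 = 0. For λ ∈ A, define an operation on A × A by (u₁,u₂) ⋆_λ (v₁,v₂) = (u₁+v₁, u₂+v₂+λ·Σ_{k=1}^{p−1} c_k u₁^k v₁^{p−k}), where c_k denotes the integer binom(p,k)/p. Then (A × A, ⋆_λ) is a commutative group with identity element (0,0). -/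
/-- The group law of the twisted Witt group `W₂^λ`:
`(u₁,u₂) ⋆_λ (v₁,v₂) = (u₁+v₁, u₂+v₂+λ·Σ_{k=1}^{p−1} (binom(p,k)/p) u₁^k v₁^{p−k})`. -/
def wittOp (p : ℕ) {A : Type*} [CommRing A] (lam : A) (u v : A × A) : A × A :=
  (u.1 + v.1,
    u.2 + v.2 + lam * ∑ k ∈ Finset.Ioo 0 p, (p.choose k / p : ℕ) * u.1 ^ k * v.1 ^ (p - k))

open Finset

private def wittS (p : ℕ) {A : Type*} [CommRing A] (u v : A) : A :=
  ∑ k ∈ Finset.Ioo 0 p, (p.choose k / p : ℕ) * u ^ k * v ^ (p - k)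

private lemma wittS_map {A B : Type*} [CommRing A] [CommRing B] (f : A →+* B) (p : ℕ)
    (u v : A) : f (wittS p u v) = wittS p (f u) (f v) := by
  simp [wittS, map_sum]

private lemma p_mul_wittS (p : ℕ) (hp : p.Prime) {A : Type*} [CommRing A] (u v : A) :
    (p : A) * wittS p u v = (u + v) ^ p - u ^ p - v ^ p := by
  have hpow := add_pow u v p
  have hp0 : 0 < p := hp.pos
  have h0 : 0 ∈ Finset.range p := Finset.mem_range.mpr hp0
  have hsplit : ∑ k ∈ Finset.range (p + 1), u ^ k * v ^ (p - k) * (p.choose k : A)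
      = v ^ p + (∑ k ∈ Finset.Ioo 0 p, u ^ k * v ^ (p - k) * (p.choose k : A)) + u ^ p := by
    rw [Finset.sum_range_succ, ← Finset.add_sum_erase _ _ h0]
    have : (Finset.range p).erase 0 = Finset.Ioo 0 p := by
      rw [Finset.range_eq_Ico, Finset.Ico_erase_left]
    simp [this]
  have key : ∀ k ∈ Finset.Ioo 0 p, (p.choose k : A) = (p : A) * ((p.choose k / p : ℕ) : A) := by
    intro k hk
    rw [Finset.mem_Ioo] at hk
    have hdvd : p ∣ p.choose k := hp.dvd_choose_self (by omega) hk.2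
    rw [← Nat.cast_mul, Nat.mul_div_cancel' hdvd]
  have hterm : ∀ k ∈ Finset.Ioo 0 p,
      (p : A) * (((p.choose k / p : ℕ) : A) * u ^ k * v ^ (p - k))
        = u ^ k * v ^ (p - k) * (p.choose k : A) := by
    intro k hk; rw [key k hk]; ring
  rw [wittS, Finset.mul_sum, Finset.sum_congr rfl hterm, hpow, hsplit]
  ring

private lemma wittS_assoc (p : ℕ) (hp : p.Prime) {A : Type*} [CommRing A] (u v w : A) :
    wittS p u v + wittS p (u + v) w = wittS p v w + wittS p u (v + w) := by
  -- first prove it in a polynomial ring over ℤ, then push forward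
  set R := MvPolynomial (Fin 3) ℤ
  have hpR : (p : R) ≠ 0 := by
    exact_mod_cast (Nat.cast_ne_zero (R := R)).mpr hp.ne_zero
  have hR : ∀ X Y Z : R, wittS p X Y + wittS p (X + Y) Z
      = wittS p Y Z + wittS p X (Y + Z) := by
    intro X Y Z
    apply mul_left_cancel₀ hpR
    rw [mul_add, mul_add, p_mul_wittS p hp, p_mul_wittS p hp, p_mul_wittS p hp,
      p_mul_wittS p hp]
    ring
  have hid := hR (MvPolynomial.X 0) (MvPolynomial.X 1) (MvPolynomial.X 2)
  let f : R →+* A :=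
    ((MvPolynomial.aeval (![u, v, w] : Fin 3 → A) : R →ₐ[ℤ] A) : R →+* A)
  have happ := congrArg f hid
  have h0 : f (MvPolynomial.X 0) = u := by show (MvPolynomial.aeval (![u, v, w] : Fin 3 → A)) _ = _; rw [MvPolynomial.aeval_X]; rfl
  have h1 : f (MvPolynomial.X 1) = v := by show (MvPolynomial.aeval (![u, v, w] : Fin 3 → A)) _ = _; rw [MvPolynomial.aeval_X]; rfl
  have h2 : f (MvPolynomial.X 2) = w := by show (MvPolynomial.aeval (![u, v, w] : Fin 3 → A)) _ = _; rw [MvPolynomial.aeval_X]; rfl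
  rw [map_add, map_add, wittS_map f, wittS_map f, wittS_map f, wittS_map f,
    map_add, map_add, h0, h1, h2] at happ
  exact happ

private lemma wittS_comm (p : ℕ) {A : Type*} [CommRing A] (u v : A) :
    wittS p u v = wittS p v u := by
  unfold wittS
  apply Finset.sum_nbij' (fun k => p - k) (fun k => p - k)
  · intro k hk; rw [Finset.mem_Ioo] at *; omega
  · intro k hk; rw [Finset.mem_Ioo] at *; omega
  · intro k hk; rw [Finset.mem_Ioo] at hk; omega
  · intro k hk; rw [Finset.mem_Ioo] at hk; omega
  · intro k hk
    rw [Finset.mem_Ioo] at hk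
    rw [Nat.choose_symm (by omega), Nat.sub_sub_self (by omega)]
    ring

private lemma wittS_zero_left (p : ℕ) {A : Type*} [CommRing A] (v : A) :
    wittS p (0 : A) v = 0 := by
  unfold wittS
  apply Finset.sum_eq_zero
  intro k hk
  rw [Finset.mem_Ioo] at hk
  rw [zero_pow (by omega)]
  ring


/-- If `p` is prime and `A` is a commutative ring with
`p·1 = 0`, then for any `λ ∈ A` the operation `⋆_λ` makes `A × A` a commutative
group with identity `(0,0)`. -/
theorem stmt17 (p : ℕ) (hp : p.Prime) {A : Type*} [CommRing A]
    (hchar : (p : A) = 0) (lam : A) :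
    (∀ x y z : A × A, wittOp p lam (wittOp p lam x y) z = wittOp p lam x (wittOp p lam y z)) ∧
    (∀ x y : A × A, wittOp p lam x y = wittOp p lam y x) ∧
    (∀ x : A × A, wittOp p lam ((0, 0) : A × A) x = x) ∧
    (∀ x : A × A, ∃ y : A × A, wittOp p lam x y = ((0, 0) : A × A)) := by
  refine ⟨?_, ?_, ?_, ?_⟩
  · intro x y z
    have h := wittS_assoc p hp x.1 y.1 z.1
    unfold wittOp wittS at *
    ext
    · simp [add_assoc]
    · simp only
      linear_combination lam * h
  · intro x y
    have h := wittS_comm p x.1 y.1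
    unfold wittOp wittS at *
    ext
    · simp [add_comm]
    · simp only
      linear_combination h * lam
  · intro x
    have h := wittS_zero_left p x.1
    unfold wittOp wittS at *
    simp [h]
  · intro x
    refine ⟨(-x.1, -x.2 - lam * wittS p x.1 (-x.1)), ?_⟩
    unfold wittOp wittS
    ext <;> simp <;> ring
end

section
/- Let p be a prime number with p > 2, let A be a commutative ring with p·1 = 0, and let λ, ν ∈ A. Define φ_{λ,ν} : A × A → A × A by φ_{λ,ν}(u₁,u₂) = (u₁^p − νu₁, u₂^p − ν^p λ^{p−1} u₂ + λ^p Σ_{k=1}^{p−1} c_k u₁^{pk}(−νu₁)^{p−k}) with c_k = binom(p,k)/p. Then for every (u₁,u₂) ∈ A × A, φ_{λ,ν}(u₁,u₂) = (0,0) if and only if u₁^p = νu₁ and u₂^p = ν^p λ^{p−1} u₂. -/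
/-- The twisted Artin–Schreier–Witt isogeny `φ_{λ,ν} = F_λ − I^ν_{λ,λ^{p−1}}`. -/
def wittIsogeny (p : ℕ) {A : Type*} [CommRing A] (lam nu : A) (u : A × A) : A × A :=
  (u.1 ^ p - nu * u.1,
    u.2 ^ p - nu ^ p * lam ^ (p - 1) * u.2 +
      lam ^ p * ∑ k ∈ Finset.Ioo 0 p,
        (p.choose k / p : ℕ) * u.1 ^ (p * k) * (-(nu * u.1)) ^ (p - k))


lemma key_int (p : ℕ) (hp : p.Prime) (hodd : Odd p) :
    ∑ k ∈ Finset.Ioo 0 p, ((p.choose k / p : ℕ) : ℤ) * (-1) ^ (p - k) = 0 := by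
  have hp0 : (0:ℤ) < (p:ℤ) := by exact_mod_cast hp.pos
  have hmul : (p:ℤ) * ∑ k ∈ Finset.Ioo 0 p, ((p.choose k / p : ℕ) : ℤ) * (-1) ^ (p - k)
      = ∑ k ∈ Finset.Ioo 0 p, ((p.choose k : ℕ) : ℤ) * (-1) ^ (p - k) := by
    rw [Finset.mul_sum]
    apply Finset.sum_congr rfl
    intro k hk
    simp only [Finset.mem_Ioo] at hk
    have hdvd : p ∣ p.choose k := hp.dvd_choose_self (by omega) hk.2
    rw [← mul_assoc]
    congr 1
    rw [← Nat.cast_mul, Nat.mul_div_cancel' hdvd]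
  have hfull : ∑ k ∈ Finset.range (p+1), ((p.choose k : ℕ) : ℤ) * (-1) ^ (p - k) = 0 := by
    have h := add_pow (1 : ℤ) (-1) p
    simp only [one_pow, one_mul, add_neg_cancel, zero_pow hp.ne_zero] at h
    calc ∑ k ∈ Finset.range (p+1), ((p.choose k : ℕ) : ℤ) * (-1) ^ (p - k)
        = ∑ k ∈ Finset.range (p+1), (-1) ^ (p - k) * ((p.choose k : ℕ) : ℤ) := by
          apply Finset.sum_congr rfl; intros; ring
      _ = 0 := h.symm
  have hIoo : ∑ k ∈ Finset.Ioo 0 p, ((p.choose k : ℕ) : ℤ) * (-1) ^ (p - k) = 0 := by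
    have hr : Finset.range (p+1) = insert 0 (insert p (Finset.Ioo 0 p)) := by
      ext x
      simp [Finset.mem_Ioo, Finset.mem_range]
      omega
    rw [hr] at hfull
    have hppos := hp.pos
    rw [Finset.sum_insert (by simp; omega), Finset.sum_insert (by simp)] at hfull
    simp [hodd.neg_one_pow] at hfull
    linarith
  have := hmul.trans hIoo
  exact (mul_eq_zero.mp this).resolve_left (by positivity)

/-- If `p > 2` is prime, `A` is a commutative ring with
`p·1 = 0` and `λ, ν ∈ A`, then `φ_{λ,ν}(u₁,u₂) = (0,0)` iff `u₁^p = ν u₁` and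
`u₂^p = ν^p λ^{p−1} u₂`. -/
theorem stmt19 (p : ℕ) (hp : p.Prime) (hp2 : 2 < p) {A : Type*} [CommRing A]
    (hchar : (p : A) = 0) (lam nu : A) :
    ∀ u₁ u₂ : A,
      wittIsogeny p lam nu (u₁, u₂) = ((0, 0) : A × A) ↔
        u₁ ^ p = nu * u₁ ∧ u₂ ^ p = nu ^ p * lam ^ (p - 1) * u₂ := by
  intro u₁ u₂
  have hodd : Odd p := hp.odd_of_ne_two (by omega)
  have hsum : u₁ ^ p = nu * u₁ →
      ∑ k ∈ Finset.Ioo 0 p, ((p.choose k / p : ℕ) : A) * u₁ ^ (p * k) * (-(nu * u₁)) ^ (p - k) = 0 := by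
    intro h
    have : ∑ k ∈ Finset.Ioo 0 p, ((p.choose k / p : ℕ) : A) * u₁ ^ (p * k) * (-(nu * u₁)) ^ (p - k)
        = (∑ k ∈ Finset.Ioo 0 p, ((p.choose k / p : ℕ) : A) * (-1) ^ (p - k)) * (nu * u₁) ^ p := by
      rw [Finset.sum_mul]
      apply Finset.sum_congr rfl
      intro k hk
      simp only [Finset.mem_Ioo] at hk
      rw [pow_mul, h, neg_pow]
      have : (nu * u₁) ^ k * ((nu * u₁) ^ (p - k)) = (nu * u₁) ^ p := by
        rw [← pow_add]
        congr 1
        omega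
      calc ((p.choose k / p : ℕ) : A) * (nu * u₁) ^ k * ((-1) ^ (p - k) * (nu * u₁) ^ (p - k))
          = ((p.choose k / p : ℕ) : A) * (-1) ^ (p - k) * ((nu * u₁) ^ k * (nu * u₁) ^ (p - k)) := by ring
        _ = _ := by rw [this]
    rw [this]
    have hz : (∑ k ∈ Finset.Ioo 0 p, ((p.choose k / p : ℕ) : A) * (-1) ^ (p - k)) = 0 := by
      have hz0 := key_int p hp hodd
      have hc : ((∑ k ∈ Finset.Ioo 0 p, ((p.choose k / p : ℕ) : ℤ) * (-1) ^ (p - k) : ℤ) : A) = 0 := by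
        rw [hz0]; simp
      simpa only [Int.cast_sum, Int.cast_mul, Int.cast_pow, Int.cast_natCast,
        Int.cast_neg, Int.cast_one] using hc
    rw [hz, zero_mul]
  constructor
  · intro h
    rw [wittIsogeny, Prod.mk.injEq] at h
    obtain ⟨h1, h2⟩ := h
    have hu1 : u₁ ^ p = nu * u₁ := by linear_combination h1
    refine ⟨hu1, ?_⟩
    rw [hsum hu1, mul_zero, add_zero, sub_eq_zero] at h2
    exact h2
  · rintro ⟨h1, h2⟩
    rw [wittIsogeny, Prod.mk.injEq]
    constructor
    · rw [h1]; ring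
    · rw [hsum h1, mul_zero, add_zero, h2]; ring
end
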